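/- Let u : Ω̄ → ℝ be Lipschitz continuous and semiconcave with modulus ω in Ω̄. Let x ∈ ∂Ω and let ν(x) be the outward unit normal to ∂Ω at x. Then for every direction θ ∈ ℝⁿ with ⟨θ, ν(x)⟩ ≤ 0, the upper and lower Dini derivatives of u at x in direction θ coincide and both equal min_{p ∈ D⁺u(x)} ⟨p, θ⟩; in particular the one-sided directional derivative ∂⁺_θ u(x) exists and equals min_{p ∈ D⁺u(x)} ⟨p, θ⟩. -/

import Mathlib

open MeasureTheory Filter Metric Set Topology
noncomputable section

/-- Euclidean space `ℝⁿ`. -/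
abbrev E (n : ℕ) := EuclideanSpace ℝ (Fin n)

/-- The oriented boundary distance `b_Ω = d_Ω − d_{Ωᶜ}`. -/
def oriDist {n : ℕ} (Ω : Set (E n)) (x : E n) : ℝ :=
  Metric.infDist x Ω - Metric.infDist x Ωᶜ

/-- `Ω` has `C²` boundary: the oriented boundary distance is `C²` on a tube around `∂Ω`. -/
def HasC2Boundary {n : ℕ} (Ω : Set (E n)) : Prop :=
  ∃ ρ > 0, ContDiffOn ℝ 2 (oriDist Ω) {y | ∃ x ∈ frontier Ω, dist y x < ρ}

/-- The outward unit normal at a boundary point (the gradient of the oriented distance). -/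
def outerNormal {n : ℕ} (Ω : Set (E n)) (x : E n) : E n := gradient (oriDist Ω) x

/-- The (Fréchet) superdifferential of `u` at `x`, relative to the set `S`:
`D⁺u(x) = {p | limsup_{y→x, y∈S} (u(y)−u(x)−⟨p,y−x⟩)/‖y−x‖ ≤ 0}`. -/
def superDiffOn {n : ℕ} (S : Set (E n)) (u : E n → ℝ) (x : E n) : Set (E n) :=
  {p | ∀ ε > 0, ∃ δ > 0, ∀ y ∈ S, ‖y - x‖ < δ →
      u y - u x - (inner ℝ p (y - x) : ℝ) ≤ ε * ‖y - x‖}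

/-- A modulus: a nondecreasing upper semicontinuous function `ω : ℝ₊ → ℝ₊` with
`ω(r) → 0` as `r → 0⁺`. -/
def IsModulus (ω : ℝ → ℝ) : Prop :=
  (∀ r ∈ Set.Ici (0:ℝ), 0 ≤ ω r) ∧ MonotoneOn ω (Set.Ici 0) ∧
    UpperSemicontinuousOn ω (Set.Ici 0) ∧
    Filter.Tendsto ω (nhdsWithin 0 (Set.Ioi 0)) (nhds 0)

/-- `u` is semiconcave on `S` with modulus `ω`:
`λ u(x) + (1−λ) u(y) − u(λx + (1−λ)y) ≤ λ(1−λ)|x−y| ω(|x−y|)` for all `λ ∈ [0,1]`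
and all `x, y ∈ S` whose segment is contained in `S`. -/
def SemiconcaveWith {n : ℕ} (S : Set (E n)) (u : E n → ℝ) (ω : ℝ → ℝ) : Prop :=
  ∀ x ∈ S, ∀ y ∈ S, segment ℝ x y ⊆ S → ∀ l ∈ Set.Icc (0:ℝ) 1,
    l * u x + (1 - l) * u y - u (l • x + (1 - l) • y) ≤
      l * (1 - l) * ‖x - y‖ * ω ‖x - y‖

/-- The filter describing `h → 0⁺`, `θ' → θ` with `x + hθ' ∈ S`, used in the definition of
the Dini derivatives of a function on `S` at `x` in direction `θ`. -/
def diniFilter {n : ℕ} (S : Set (E n)) (x θ : E n) : Filter (ℝ × E n) :=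
  ((nhdsWithin (0:ℝ) (Set.Ioi 0)) ×ˢ nhds θ) ⊓
    Filter.principal {q : ℝ × E n | x + q.1 • q.2 ∈ S}

/-- The difference quotient `(h, θ') ↦ (u(x + hθ') − u(x))/h`. -/
def diffQuot {n : ℕ} (u : E n → ℝ) (x : E n) : ℝ × E n → ℝ :=
  fun q => (u (x + q.1 • q.2) - u x) / q.1

/-!
Along a strictly inward direction `w` (`⟪ν, w⟫ < 0`), semiconcavity makes the difference quotient
`h ↦ (u (x + h w) - u x) / h` nonincreasing up to the error `‖w‖ ω(h ‖w‖)`, so the radial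
derivative `Φ w` exists; on the open half-space of inward directions `Φ` is `K`-Lipschitz, concave
and positively homogeneous. Extending `Φ` Lipschitz to all of `ℝⁿ` and separating its hypograph
from `(θ, Φ θ)` yields a linear majorant `⟪p, ·⟫` of `Φ` touching it at `θ`. Pushing `y - x`, for
`y ∈ Ω̄` near `x`, slightly along `-ν` into the inward cone shows `p ∈ D⁺u(x)`. Finally every Dini
quotient is squeezed between `⟪p, θ⟫ ± ε`: from below by comparison with a nearby inward direction,
from above by the definition of `D⁺u(x)`, which also shows `⟪p', θ⟫ ≥ ⟪p, θ⟫` for all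
`p' ∈ D⁺u(x)`.
-/

open scoped NNReal InnerProductSpace

section BoundaryGeometry

variable {n : ℕ} {Ω : Set (E n)} {x : E n}

lemma oriDist_nonpos_of_mem_closure {y : E n} (hy : y ∈ closure Ω) : oriDist Ω y ≤ 0 := by
  rw [oriDist, infDist_zero_of_mem_closure hy, zero_sub, neg_nonpos]
  exact infDist_nonneg

lemma mem_of_oriDist_neg {y : E n} (hy : oriDist Ω y < 0) : y ∈ Ω := by
  by_contra hyΩ
  rw [oriDist, infDist_zero_of_mem (mem_compl hyΩ), sub_zero] at hy
  exact hy.not_ge infDist_nonneg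

lemma oriDist_eq_zero_of_mem_frontier (hx : x ∈ frontier Ω) : oriDist Ω x = 0 := by
  rw [frontier_eq_closure_inter_closure] at hx
  rw [oriDist, infDist_zero_of_mem_closure hx.1, infDist_zero_of_mem_closure hx.2, sub_zero]

lemma HasC2Boundary.contDiffAt_oriDist (hΩ : HasC2Boundary Ω) (hx : x ∈ frontier Ω) :
    ContDiffAt ℝ 2 (oriDist Ω) x := by
  obtain ⟨ρ, hρ, hC2⟩ := hΩ
  exact hC2.contDiffAt (mem_of_superset (ball_mem_nhds x hρ) fun y hy => ⟨x, hx, hy⟩)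

variable (hx : x ∈ frontier Ω) (hC1 : ContDiffAt ℝ 1 (oriDist Ω) x)
include hx hC1

lemma isLittleO_oriDist_sub_inner :
    (fun v => oriDist Ω (x + v) - ⟪outerNormal Ω x, v⟫_ℝ) =o[𝓝 0] fun v => v := by
  have h := ((hC1.differentiableAt one_ne_zero).hasGradientAt).hasFDerivAt
  rw [hasFDerivAt_iff_isLittleO_nhds_zero] at h
  simpa [oriDist_eq_zero_of_mem_frontier hx, outerNormal] using h

lemma eventually_inner_outerNormal_le {ε : ℝ} (hε : 0 < ε) :
    ∀ᶠ v in 𝓝 0, x + v ∈ closure Ω → ⟪outerNormal Ω x, v⟫_ℝ ≤ ε * ‖v‖ := by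
  filter_upwards [(isLittleO_oriDist_sub_inner hx hC1).def hε] with v hv hmem
  have := oriDist_nonpos_of_mem_closure hmem
  rw [Real.norm_eq_abs, abs_le] at hv
  linarith [hv.1]

lemma exists_add_mem_closure_of_inner_le {a : ℝ} (ha : 0 < a) :
    ∃ δ > 0, ∀ v : E n, ‖v‖ < δ → ⟪outerNormal Ω x, v⟫_ℝ ≤ -a * ‖v‖ → x + v ∈ closure Ω := by
  obtain ⟨δ, hδ, hball⟩ := Metric.eventually_nhds_iff_ball.1
    ((isLittleO_oriDist_sub_inner hx hC1).def (half_pos ha))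
  refine ⟨δ, hδ, fun v hv hinner => ?_⟩
  rcases eq_or_ne v 0 with rfl | hv0
  · simpa using frontier_subset_closure hx
  refine subset_closure (mem_of_oriDist_neg ?_)
  have h := hball v (by simpa using hv)
  rw [Real.norm_eq_abs, abs_le] at h
  nlinarith [norm_pos_iff.2 hv0, h.2]

/- If `∇b(x) = 0`, then `b` is `1/2`-Lipschitz near `x`; but `b` increases by `dist y z` from a
point `y ∈ Ω` near `x` to its nearest point `z ∉ Ω`. -/
lemma outerNormal_ne_zero (hΩo : IsOpen Ω) : outerNormal Ω x ≠ 0 := by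
  intro hν
  have hderiv : fderiv ℝ (oriDist Ω) x = 0 := by
    rw [((hC1.differentiableAt one_ne_zero).hasGradientAt).hasFDerivAt.fderiv, ← outerNormal, hν,
      map_zero]
  have hsmall :
      ∀ᶠ y in 𝓝 x, ContDiffAt ℝ 1 (oriDist Ω) y ∧ ‖fderiv ℝ (oriDist Ω) y‖ < 1 / 2 := by
    refine (hC1.eventually (by simp)).and ?_
    have := (hC1.continuousAt_fderiv one_ne_zero).norm
    rw [ContinuousAt, hderiv, norm_zero] at this
    exact this.eventually_lt_const (by norm_num)
  obtain ⟨r, hr, hball⟩ := Metric.eventually_nhds_iff_ball.1 hsmall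
  obtain ⟨y, hyΩ, hxy⟩ :=
    Metric.mem_closure_iff.1 (frontier_subset_closure hx) (r / 2) (half_pos hr)
  have hxΩ : x ∈ Ωᶜ := fun h => hx.2 (by rwa [hΩo.interior_eq])
  obtain ⟨z, hzΩ, hyz⟩ := hΩo.isClosed_compl.exists_infDist_eq_dist ⟨x, hxΩ⟩ y
  have hd : 0 < dist y z :=
    hyz ▸ (hΩo.isClosed_compl.notMem_iff_infDist_pos ⟨x, hxΩ⟩).1 (not_not.2 hyΩ)
  have hdx : dist y z ≤ dist y x := hyz ▸ infDist_le_dist_of_mem hxΩ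
  have hy : y ∈ ball x r := by rw [mem_ball, dist_comm]; linarith
  have hz : z ∈ ball x r := by
    rw [mem_ball]; linarith [dist_triangle z y x, dist_comm z y, dist_comm x y]
  have hmvt := (convex_ball x r).norm_image_sub_le_of_norm_fderiv_le
    (fun w hw => (hball w hw).1.differentiableAt one_ne_zero) (fun w hw => (hball w hw).2.le) hy hz
  have hby : oriDist Ω y = -dist y z := by
    rw [oriDist, infDist_zero_of_mem hyΩ, hyz, zero_sub]
  have hbz : 0 ≤ oriDist Ω z := by
    rw [oriDist, infDist_zero_of_mem hzΩ, sub_zero]; exact infDist_nonneg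
  rw [← dist_eq_norm, ← dist_eq_norm, dist_comm z y, Real.dist_eq, hby,
    abs_of_nonneg (by linarith)] at hmvt
  linarith

end BoundaryGeometry

lemma tendsto_mul_const_nhdsGT_zero {c : ℝ} (hc : 0 < c) :
    Tendsto (fun h => h * c) (𝓝[>] 0) (𝓝[>] 0) :=
  tendsto_nhdsWithin_of_tendsto_nhds_of_eventually_within _
    (((continuous_mul_const c).tendsto' 0 0 (zero_mul c)).mono_left nhdsWithin_le_nhds)
    (eventually_nhdsWithin_of_forall fun _ hh => mul_pos hh hc)

lemma IsModulus.tendsto_mul_comp_mul {ω : ℝ → ℝ} (hω : IsModulus ω) {c : ℝ} (hc : 0 ≤ c) :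
    Tendsto (fun h => c * ω (h * c)) (𝓝[>] 0) (𝓝 0) := by
  rcases hc.eq_or_lt with rfl | hc
  · simp
  simpa using (hω.2.2.2.comp (tendsto_mul_const_nhdsGT_zero hc)).const_mul c

section RadialDerivative

variable {n : ℕ} {S : Set (E n)} {u : E n → ℝ} {K : ℝ≥0} {ω : ℝ → ℝ} {x w : E n}

def radialDeriv (u : E n → ℝ) (x w : E n) : ℝ :=
  limUnder (𝓝[>] 0) fun h => diffQuot u x (h, w)

lemma abs_diffQuot_sub_le (hK : LipschitzOnWith K u S) {h : ℝ} (hh : 0 < h) {w' : E n}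
    (hw : x + h • w ∈ S) (hw' : x + h • w' ∈ S) :
    |diffQuot u x (h, w) - diffQuot u x (h, w')| ≤ K * ‖w - w'‖ := by
  have hdist := hK.dist_le_mul _ hw _ hw'
  rw [Real.dist_eq, dist_eq_norm, show x + h • w - (x + h • w') = h • (w - w') by module,
    norm_smul, Real.norm_of_nonneg hh.le] at hdist
  rw [diffQuot, diffQuot, div_sub_div_same, sub_sub_sub_cancel_right, abs_div, abs_of_pos hh,
    div_le_iff₀ hh]
  linarith

lemma diffQuot_sub_le_diffQuot (hω : IsModulus ω) (hu : SemiconcaveWith S u ω) {h₁ h₂ : ℝ}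
    (hseg : ∀ t ∈ Icc 0 h₂, x + t • w ∈ S) (hh₁ : 0 < h₁) (h₁₂ : h₁ ≤ h₂) :
    diffQuot u x (h₂, w) - ‖w‖ * ω (h₂ * ‖w‖) ≤ diffQuot u x (h₁, w) := by
  have hh₂ : 0 < h₂ := hh₁.trans_le h₁₂
  have hX : x + h₂ • w ∈ S := hseg h₂ ⟨hh₂.le, le_rfl⟩
  have hx : x ∈ S := by simpa using hseg 0 ⟨le_rfl, hh₂.le⟩
  have hsub : segment ℝ (x + h₂ • w) x ⊆ S := by
    rintro _ ⟨a, b, ha, hb, hab, rfl⟩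
    obtain rfl : b = 1 - a := by linarith
    convert hseg (a * h₂) ⟨by positivity, by nlinarith⟩ using 1
    module
  obtain ⟨l, rfl⟩ : ∃ l, l * h₂ = h₁ := ⟨h₁ / h₂, div_mul_cancel₀ h₁ hh₂.ne'⟩
  have hl : l ∈ Icc (0 : ℝ) 1 :=
    ⟨(pos_of_mul_pos_left hh₁ hh₂.le).le, (mul_le_iff_le_one_left hh₂).1 h₁₂⟩
  have key := hu _ hX _ hx hsub l hl
  rw [show l • (x + h₂ • w) + (1 - l) • x = x + (l * h₂) • w by module,
    show x + h₂ • w - x = h₂ • w by abel, norm_smul, Real.norm_of_nonneg hh₂.le] at key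
  have hω0 := hω.1 _ (mul_nonneg hh₂.le (norm_nonneg w))
  have e : (u (x + h₂ • w) - u x) / h₂ * (l * h₂) = l * (u (x + h₂ • w) - u x) := by
    field_simp
  simp only [diffQuot]
  rw [le_div_iff₀ hh₁, sub_mul, e]
  nlinarith [mul_nonneg (mul_nonneg hl.1 hl.1) (mul_nonneg hh₂.le (mul_nonneg (norm_nonneg w) hω0))]

lemma tendsto_radialDeriv (hK : LipschitzOnWith K u S) (hω : IsModulus ω)
    (hu : SemiconcaveWith S u ω) {h₀ : ℝ} (hh₀ : 0 < h₀) (hseg : ∀ t ∈ Icc 0 h₀, x + t • w ∈ S) :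
    Tendsto (fun h => diffQuot u x (h, w)) (𝓝[>] 0) (𝓝 (radialDeriv u x w)) := by
  set f := fun h => diffQuot u x (h, w)
  have hx : x ∈ S := by simpa using hseg 0 ⟨le_rfl, hh₀.le⟩
  have hbound : ∀ᶠ h in 𝓝[>] 0, |f h| ≤ K * ‖w‖ := by
    filter_upwards [Ioo_mem_nhdsGT hh₀] with h hh
    simpa [f, diffQuot] using
      abs_diffQuot_sub_le hK hh.1 (hseg h ⟨hh.1.le, hh.2.le⟩) (w' := 0) (by simpa using hx)
  set L := liminf f (𝓝[>] 0)
  have hupper : ∀ᶠ h in 𝓝[>] 0, f h ≤ L + ‖w‖ * ω (h * ‖w‖) := by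
    filter_upwards [Ioo_mem_nhdsGT hh₀] with h₂ hh₂
    have : f h₂ - ‖w‖ * ω (h₂ * ‖w‖) ≤ L := by
      refine le_liminf_of_le (isCoboundedUnder_ge_of_eventually_le _
        (hbound.mono fun h hh => (abs_le.1 hh).2)) ?_
      filter_upwards [Ioo_mem_nhdsGT hh₂.1] with h₁ hh₁
      exact diffQuot_sub_le_diffQuot hω hu (fun t ht => hseg t ⟨ht.1, ht.2.trans hh₂.2.le⟩)
        hh₁.1 hh₁.2.le
    linarith
  refine tendsto_nhds_limUnder ⟨L, Metric.tendsto_nhds.2 fun ε hε => ?_⟩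
  have hlower : ∀ᶠ h in 𝓝[>] 0, L - ε < f h :=
    eventually_lt_of_lt_liminf (by linarith)
      (isBoundedUnder_of_eventually_ge (hbound.mono fun h hh => (abs_le.1 hh).1))
  filter_upwards [hupper, hlower,
    (hω.tendsto_mul_comp_mul (norm_nonneg w)).eventually (gt_mem_nhds hε)] with h h₁ h₂ h₃
  rw [Real.dist_eq, abs_lt]
  constructor <;> linarith

lemma sub_le_radialDeriv (hK : LipschitzOnWith K u S) (hω : IsModulus ω)
    (hu : SemiconcaveWith S u ω) {h₀ : ℝ} (hh₀ : 0 < h₀) (hseg : ∀ t ∈ Icc 0 h₀, x + t • w ∈ S) :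
    diffQuot u x (h₀, w) - ‖w‖ * ω (h₀ * ‖w‖) ≤ radialDeriv u x w :=
  ge_of_tendsto (tendsto_radialDeriv hK hω hu hh₀ hseg) <| by
    filter_upwards [Ioo_mem_nhdsGT hh₀] with h hh
    exact diffQuot_sub_le_diffQuot hω hu hseg hh.1 hh.2.le

lemma sub_sub_inner_le_of_radialDeriv_le (hK : LipschitzOnWith K u S) (hω : IsModulus ω)
    (hu : SemiconcaveWith S u ω) {p v : E n} (hv : x + v ∈ S)
    (hseg : ∀ t ∈ Icc (0 : ℝ) 1, x + t • w ∈ S) (hp : radialDeriv u x w ≤ ⟪p, w⟫_ℝ) :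
    u (x + v) - u x - ⟪p, v⟫_ℝ ≤ (K + ‖p‖) * ‖v - w‖ + ‖w‖ * ω ‖w‖ := by
  have hlip : u (x + v) - u (x + w) ≤ K * ‖v - w‖ := by
    have := hK.dist_le_mul _ hv _ (by simpa using hseg 1 ⟨zero_le_one, le_rfl⟩)
    rw [Real.dist_eq, dist_eq_norm, add_sub_add_left_eq_sub] at this
    linarith [le_abs_self (u (x + v) - u (x + w))]
  have hradial : u (x + w) - u x - ‖w‖ * ω ‖w‖ ≤ ⟪p, w⟫_ℝ := by
    have := sub_le_radialDeriv hK hω hu one_pos hseg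
    simp only [diffQuot, one_smul, div_one, one_mul] at this
    exact this.trans hp
  have hpvw : ⟪p, w⟫_ℝ - ⟪p, v⟫_ℝ ≤ ‖p‖ * ‖v - w‖ := by
    rw [← inner_sub_right, ← norm_neg (v - w), neg_sub]
    exact real_inner_le_norm p (w - v)
  linarith

lemma radialDeriv_smul
    (hw : Tendsto (fun h => diffQuot u x (h, w)) (𝓝[>] 0) (𝓝 (radialDeriv u x w)))
    {t : ℝ} (ht : 0 < t) : radialDeriv u x (t • w) = t * radialDeriv u x w := by
  refine Tendsto.limUnder_eq (((hw.comp (tendsto_mul_const_nhdsGT_zero ht)).const_mul t).congr' ?_)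
  filter_upwards [self_mem_nhdsWithin] with h (hh : 0 < h)
  simp only [Function.comp, diffQuot, smul_smul]
  field_simp

lemma abs_radialDeriv_sub_le (hK : LipschitzOnWith K u S) {w' : E n}
    (hw : Tendsto (fun h => diffQuot u x (h, w)) (𝓝[>] 0) (𝓝 (radialDeriv u x w)))
    (hw' : Tendsto (fun h => diffQuot u x (h, w')) (𝓝[>] 0) (𝓝 (radialDeriv u x w')))
    (hS : ∀ᶠ h in 𝓝[>] (0 : ℝ), x + h • w ∈ S ∧ x + h • w' ∈ S) :
    |radialDeriv u x w - radialDeriv u x w'| ≤ K * ‖w - w'‖ :=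
  le_of_tendsto (hw.sub hw').abs <| by
    filter_upwards [hS, self_mem_nhdsWithin] with h hh (h0 : 0 < h)
    exact abs_diffQuot_sub_le hK h0 hh.1 hh.2

lemma radialDeriv_add_le (hω : IsModulus ω) (hu : SemiconcaveWith S u ω) {w₁ w₂ : E n}
    {a b : ℝ} (ha : 0 ≤ a) (hb : 0 ≤ b) (hab : a + b = 1)
    (hw₁ : Tendsto (fun h => diffQuot u x (h, w₁)) (𝓝[>] 0) (𝓝 (radialDeriv u x w₁)))
    (hw₂ : Tendsto (fun h => diffQuot u x (h, w₂)) (𝓝[>] 0) (𝓝 (radialDeriv u x w₂)))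
    (hw : Tendsto (fun h => diffQuot u x (h, a • w₁ + b • w₂)) (𝓝[>] 0)
      (𝓝 (radialDeriv u x (a • w₁ + b • w₂))))
    (hS : ∀ᶠ h in 𝓝[>] (0 : ℝ), ∀ w ∈ segment ℝ w₁ w₂, x + h • w ∈ S) :
    a * radialDeriv u x w₁ + b * radialDeriv u x w₂ ≤ radialDeriv u x (a • w₁ + b • w₂) := by
  obtain rfl : b = 1 - a := by linarith
  have hlim := (((hω.tendsto_mul_comp_mul (norm_nonneg (w₁ - w₂))).const_mul (a * (1 - a))))
  rw [mul_zero] at hlim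
  have := le_of_tendsto_of_tendsto (((hw₁.const_mul a).add (hw₂.const_mul (1 - a))).sub hw) hlim ?_
  · linarith
  filter_upwards [hS, self_mem_nhdsWithin] with h hh (h0 : 0 < h)
  have hsub : segment ℝ (x + h • w₁) (x + h • w₂) ⊆ S := by
    rintro _ ⟨c, d, hc, hd, hcd, rfl⟩
    convert hh (c • w₁ + d • w₂) ⟨c, d, hc, hd, hcd, rfl⟩ using 1
    rw [show c • (x + h • w₁) + d • (x + h • w₂) = (c + d) • x + h • (c • w₁ + d • w₂) by module,
      hcd, one_smul]
  have key := hu _ (hh w₁ (left_mem_segment ℝ w₁ w₂)) _ (hh w₂ (right_mem_segment ℝ w₁ w₂)) hsub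
    a ⟨ha, by linarith⟩
  rw [show a • (x + h • w₁) + (1 - a) • (x + h • w₂) = x + h • (a • w₁ + (1 - a) • w₂) by module,
    show x + h • w₁ - (x + h • w₂) = h • (w₁ - w₂) by module, norm_smul,
    Real.norm_of_nonneg h0.le] at key
  simp only [diffQuot]
  rw [← sub_nonneg] at key ⊢
  convert div_nonneg key h0.le using 1
  field_simp
  ring

end RadialDerivative

section Supergradient

variable {F : Type*} [NormedAddCommGroup F] {s : Set F} {g : F → ℝ} {M : ℝ≥0} {θ : F}

/-- The strict hypograph of `w ↦ sup_{v ∈ s} (g v - M ‖w - v‖)`, the `M`-Lipschitz extension of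
`g` from `s`. -/
def lipschitzHypograph (s : Set F) (g : F → ℝ) (M : ℝ≥0) : Set (F × ℝ) :=
  {q | ∃ v ∈ s, q.2 + M * ‖q.1 - v‖ < g v}

lemma isOpen_lipschitzHypograph : IsOpen (lipschitzHypograph s g M) := by
  have : lipschitzHypograph s g M = ⋃ v ∈ s, {q : F × ℝ | q.2 + M * ‖q.1 - v‖ < g v} := by
    ext; simp [lipschitzHypograph]
  rw [this]
  exact isOpen_biUnion fun v _ => isOpen_lt (by fun_prop) continuous_const

variable [NormedSpace ℝ F]

lemma ConcaveOn.convex_lipschitzHypograph (hg : ConcaveOn ℝ s g) :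
    Convex ℝ (lipschitzHypograph s g M) := by
  rintro ⟨w₁, t₁⟩ ⟨v₁, hv₁, h₁⟩ ⟨w₂, t₂⟩ ⟨v₂, hv₂, h₂⟩ a b ha hb hab
  refine ⟨a • v₁ + b • v₂, hg.1 hv₁ hv₂ ha hb hab, ?_⟩
  have hconc := hg.2 hv₁ hv₂ ha hb hab
  have hnorm : ‖a • w₁ + b • w₂ - (a • v₁ + b • v₂)‖ ≤ a * ‖w₁ - v₁‖ + b * ‖w₂ - v₂‖ := by
    rw [show a • w₁ + b • w₂ - (a • v₁ + b • v₂) = a • (w₁ - v₁) + b • (w₂ - v₂) by module]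
    refine (norm_add_le _ _).trans_eq ?_
    rw [norm_smul, norm_smul, Real.norm_of_nonneg ha, Real.norm_of_nonneg hb]
  have hcomb : a * (t₁ + M * ‖w₁ - v₁‖) + b * (t₂ + M * ‖w₂ - v₂‖) < a * g v₁ + b * g v₂ := by
    rcases ha.eq_or_lt with rfl | ha
    · obtain rfl : b = 1 := by simpa using hab
      simpa using h₂
    · nlinarith [mul_lt_mul_of_pos_left h₁ ha, mul_le_mul_of_nonneg_left h₂.le hb]
  simp only [Prod.fst_add, Prod.snd_add, Prod.smul_fst, Prod.smul_snd, smul_eq_mul] at hconc ⊢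
  nlinarith [mul_le_mul_of_nonneg_left hnorm M.coe_nonneg]

lemma ConcaveOn.exists_le_add_of_lipschitzOnWith (hg : ConcaveOn ℝ s g)
    (hlip : LipschitzOnWith M g (closure s)) (hθ : θ ∈ closure s) :
    ∃ ℓ : F →L[ℝ] ℝ, ∀ v ∈ s, g v ≤ g θ + ℓ (v - θ) := by
  set A := lipschitzHypograph s g M
  have hθA : (θ, g θ) ∉ A := by
    rintro ⟨v, hv, hlt⟩
    have := hlip.dist_le_mul θ hθ v (subset_closure hv)
    rw [Real.dist_eq, dist_eq_norm] at this
    linarith [neg_abs_le (g θ - g v)]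
  obtain ⟨f, hf⟩ :=
    geometric_hahn_banach_open_point hg.convex_lipschitzHypograph isOpen_lipschitzHypograph hθA
  set ℓ₀ := f.comp (ContinuousLinearMap.inl ℝ F ℝ)
  set c := f (0, 1)
  have hf_apply : ∀ w t, f (w, t) = ℓ₀ w + t * c := by
    intro w t
    rw [show ((w, t) : F × ℝ) = (w, 0) + t • (0, 1) by simp, map_add, map_smul, smul_eq_mul]
    rfl
  -- Lipschitz continuity at `θ` keeps the separating hyperplane from being vertical.
  have hc : 0 < c := by
    obtain ⟨v, hv, hθv⟩ := Metric.mem_closure_iff.1 hθ (1 / (2 * M + 1)) (by positivity)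
    have hlipv := hlip.dist_le_mul θ hθ v (subset_closure hv)
    rw [Real.dist_eq] at hlipv
    have hsmall : 2 * M * dist θ v < 1 := by
      rw [lt_div_iff₀ (by positivity)] at hθv
      nlinarith [dist_nonneg (x := θ) (y := v)]
    have hmem : (θ, g θ - 1) ∈ A := ⟨v, hv, by
      show g θ - 1 + M * ‖θ - v‖ < g v
      rw [← dist_eq_norm]
      linarith [le_abs_self (g θ - g v)]⟩
    have := hf _ hmem
    rw [hf_apply, hf_apply] at this
    linarith
  refine ⟨-c⁻¹ • ℓ₀, fun v hv => ?_⟩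
  have hle : ℓ₀ v + g v * c ≤ ℓ₀ θ + g θ * c := by
    refine le_of_forall_pos_lt_add fun ε hε => ?_
    have := hf (v, g v - ε / c) ⟨v, hv, by simpa using div_pos hε hc⟩
    rw [hf_apply, hf_apply, sub_mul, div_mul_cancel₀ _ hc.ne'] at this
    linarith
  have : c⁻¹ * (ℓ₀ v - ℓ₀ θ) ≤ g θ - g v := by
    rw [inv_mul_le_iff₀ hc]
    linarith
  rw [smul_apply, map_sub, smul_eq_mul]
  linarith

lemma ConcaveOn.exists_le_eq_of_smul (hg : ConcaveOn ℝ s g)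
    (hlip : LipschitzOnWith M g (closure s)) (hs : ∀ t : ℝ, 0 < t → ∀ w ∈ s, t • w ∈ s)
    (hhom : ∀ t : ℝ, 0 < t → ∀ w ∈ s, g (t • w) = t * g w) (hθ : θ ∈ closure s) :
    ∃ ℓ : F →L[ℝ] ℝ, (∀ w ∈ s, g w ≤ ℓ w) ∧ ℓ θ = g θ := by
  obtain ⟨ℓ, hℓ⟩ := hg.exists_le_add_of_lipschitzOnWith hlip hθ
  have hscaled : ∀ w ∈ s, ∀ t : ℝ, 0 < t → t * (g w - ℓ w) ≤ g θ - ℓ θ := by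
    intro w hw t ht
    have := hℓ _ (hs t ht w hw)
    rw [hhom t ht w hw, map_sub, map_smul, smul_eq_mul] at this
    linarith
  have hle : ∀ w ∈ s, g w ≤ ℓ w := by
    intro w hw
    refine sub_nonpos.1
      (ge_of_tendsto ((tendsto_const_nhds (x := g θ - ℓ θ)).div_atTop tendsto_id) ?_)
    filter_upwards [eventually_gt_atTop 0] with t ht
    rw [id, le_div_iff₀ ht, mul_comm]
    exact hscaled w hw t ht
  refine ⟨ℓ, hle, le_antisymm ?_ ?_⟩
  · obtain ⟨w, hw⟩ := closure_nonempty_iff.1 ⟨θ, hθ⟩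
    have hlim : Tendsto (fun t : ℝ => t * (g w - ℓ w)) (𝓝[>] 0) (𝓝 0) := by
      simpa using (tendsto_id.mul_const (g w - ℓ w)).mono_left (nhdsWithin_le_nhds (a := (0:ℝ)))
    have := le_of_tendsto hlim (eventually_nhdsWithin_of_forall fun t ht => hscaled w hw t ht)
    linarith
  · exact le_on_closure hle hlip.continuousOn ℓ.continuous.continuousOn hθ

end Supergradient

section DiniDerivative

variable {n : ℕ} {S : Set (E n)} {u : E n → ℝ} {x θ : E n}

lemma diniFilter_neBot (h : ∃ᶠ w in 𝓝 θ, ∀ᶠ t in 𝓝[>] (0 : ℝ), x + t • w ∈ S) :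
    (diniFilter S x θ).NeBot := by
  rw [diniFilter, inf_principal_neBot_iff]
  intro U hU
  obtain ⟨A, hA, B, hB, hAB⟩ := mem_prod_iff.1 hU
  obtain ⟨w, hw, hwB⟩ := (h.and_eventually hB).exists
  obtain ⟨t, ht, htA⟩ := (hw.and hA).exists
  exact ⟨(t, w), hAB ⟨htA, hwB⟩, ht⟩

lemma eventually_diffQuot_le {p : E n} (hp : p ∈ superDiffOn S u x) {ε : ℝ} (hε : 0 < ε) :
    ∀ᶠ q in diniFilter S x θ, diffQuot u x q ≤ ⟪p, θ⟫_ℝ + ε := by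
  obtain ⟨δ, hδ, hpδ⟩ := hp (ε / (‖θ‖ + 1)) (by positivity)
  have hnear : ∀ᶠ θ' in 𝓝 θ, ⟪p, θ'⟫_ℝ + ε / (‖θ‖ + 1) * ‖θ'‖ < ⟪p, θ⟫_ℝ + ε := by
    refine (by fun_prop : Continuous fun θ' : E n => ⟪p, θ'⟫_ℝ + ε / (‖θ‖ + 1) * ‖θ'‖)
      |>.continuousAt.eventually_lt continuousAt_const ?_
    rw [add_lt_add_iff_left, div_mul_eq_mul_div, div_lt_iff₀ (by positivity)]
    nlinarith
  have hsmall : ∀ᶠ q : ℝ × E n in 𝓝[>] 0 ×ˢ 𝓝 θ, ‖q.1 • q.2‖ < δ := by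
    have : Tendsto (fun q : ℝ × E n => q.1 • q.2) (𝓝 0 ×ˢ 𝓝 θ) (𝓝 0) := by
      rw [← nhds_prod_eq]
      exact (by fun_prop : Continuous fun q : ℝ × E n => q.1 • q.2).tendsto' _ _ (zero_smul ℝ θ)
    simpa using (this.mono_left (prod_mono nhdsWithin_le_nhds le_rfl)).eventually
      (ball_mem_nhds (0 : E n) hδ)
  rw [diniFilter, eventually_inf_principal]
  filter_upwards [hsmall, eventually_mem_nhdsWithin.prod_inl _, hnear.prod_inr _]
    with ⟨h, θ'⟩ hhθ' (hh : 0 < h) hθ' hmem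
  have key := hpδ _ hmem (by rwa [add_sub_cancel_left])
  rw [add_sub_cancel_left, real_inner_smul_right, norm_smul, Real.norm_of_nonneg hh.le] at key
  show (u (x + h • θ') - u x) / h ≤ _
  rw [div_le_iff₀ hh]
  nlinarith

lemma eventually_le_diffQuot {K : ℝ≥0} (hK : LipschitzOnWith K u S) {w : E n} {L : ℝ}
    (hw : Tendsto (fun h => diffQuot u x (h, w)) (𝓝[>] 0) (𝓝 L))
    (hS : ∀ᶠ h in 𝓝[>] (0 : ℝ), x + h • w ∈ S) {ε : ℝ} (hε : 0 < ε) :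
    ∀ᶠ q in diniFilter S x θ, L - K * ‖θ - w‖ - ε ≤ diffQuot u x q := by
  have hnear : ∀ᶠ θ' in 𝓝 θ, K * ‖θ' - w‖ < K * ‖θ - w‖ + ε / 2 :=
    (by fun_prop : Continuous fun θ' : E n => K * ‖θ' - w‖).continuousAt.eventually_lt
      continuousAt_const (by linarith)
  have hlim : ∀ᶠ h in 𝓝[>] 0, L - ε / 2 < diffQuot u x (h, w) :=
    hw.eventually (lt_mem_nhds (by linarith))
  rw [diniFilter, eventually_inf_principal]
  filter_upwards [(hlim.and (hS.and eventually_mem_nhdsWithin)).prod_inl _, hnear.prod_inr _]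
    with ⟨h, θ'⟩ ⟨hq, hwS, (hh : 0 < h)⟩ hθ' hmem
  have := abs_diffQuot_sub_le hK hh hmem hwS
  linarith [neg_abs_le (diffQuot u x (h, θ') - diffQuot u x (h, w))]

lemma le_inner_of_tendsto_diffQuot [(diniFilter S x θ).NeBot] {m : ℝ}
    (hm : Tendsto (diffQuot u x) (diniFilter S x θ) (𝓝 m)) {p : E n}
    (hp : p ∈ superDiffOn S u x) : m ≤ ⟪p, θ⟫_ℝ :=
  le_of_forall_pos_le_add fun _ hε => le_of_tendsto hm (eventually_diffQuot_le hp hε)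

end DiniDerivative

section InwardCone

variable {n : ℕ} {Ω : Set (E n)} {x : E n}

def inwardCone (Ω : Set (E n)) (x : E n) : Set (E n) := {w | ⟪outerNormal Ω x, w⟫_ℝ < 0}

lemma convex_inwardCone : Convex ℝ (inwardCone Ω x) :=
  convex_halfSpace_lt (innerₛₗ ℝ (outerNormal Ω x)).isLinear 0

lemma smul_mem_inwardCone {t : ℝ} (ht : 0 < t) {w : E n} (hw : w ∈ inwardCone Ω x) :
    t • w ∈ inwardCone Ω x := by
  simpa [inwardCone, real_inner_smul_right] using mul_neg_of_pos_of_neg ht hw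

lemma mem_closure_inwardCone (hν : outerNormal Ω x ≠ 0) {θ : E n}
    (hθ : ⟪outerNormal Ω x, θ⟫_ℝ ≤ 0) : θ ∈ closure (inwardCone Ω x) := by
  refine mem_closure_of_tendsto (f := fun ε : ℝ => θ - ε • outerNormal Ω x) (b := 𝓝[>] 0)
    (((by fun_prop : Continuous fun ε : ℝ => θ - ε • outerNormal Ω x).tendsto' 0 θ
      (by simp)).mono_left nhdsWithin_le_nhds) ?_
  filter_upwards [self_mem_nhdsWithin] with ε (hε : 0 < ε)
  have := mul_pos hε (real_inner_self_pos.2 hν)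
  show ⟪_, θ - ε • _⟫_ℝ < 0
  rw [inner_sub_right, real_inner_smul_right]
  linarith

variable (hx : x ∈ frontier Ω) (hC1 : ContDiffAt ℝ 1 (oriDist Ω) x)
include hx hC1

lemma exists_smul_segment_subset_closure {w₁ w₂ : E n} (h₁ : w₁ ∈ inwardCone Ω x)
    (h₂ : w₂ ∈ inwardCone Ω x) :
    ∃ h₀ > 0, ∀ h ∈ Icc (0 : ℝ) h₀, ∀ w ∈ segment ℝ w₁ w₂, x + h • w ∈ closure Ω := by
  set ν := outerNormal Ω x
  set a := min (-⟪ν, w₁⟫_ℝ) (-⟪ν, w₂⟫_ℝ)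
  have ha : 0 < a := lt_min (neg_pos.2 h₁) (neg_pos.2 h₂)
  set R := ‖w₁‖ + ‖w₂‖ + 1
  have hR : 0 < R := by positivity
  have hseg : ∀ w ∈ segment ℝ w₁ w₂, ⟪ν, w⟫_ℝ ≤ -a ∧ ‖w‖ ≤ R := by
    rintro _ ⟨c, d, hc, hd, hcd, rfl⟩
    rw [inner_add_right, real_inner_smul_right, real_inner_smul_right]
    refine ⟨by nlinarith [min_le_left (-⟪ν, w₁⟫_ℝ) (-⟪ν, w₂⟫_ℝ),
      min_le_right (-⟪ν, w₁⟫_ℝ) (-⟪ν, w₂⟫_ℝ)], ?_⟩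
    refine (norm_add_le _ _).trans ?_
    rw [norm_smul, norm_smul, Real.norm_of_nonneg hc, Real.norm_of_nonneg hd]
    nlinarith [norm_nonneg w₁, norm_nonneg w₂]
  obtain ⟨δ, hδ, hmem⟩ := exists_add_mem_closure_of_inner_le hx hC1 (div_pos ha hR)
  refine ⟨δ / (2 * R), by positivity, fun h hh w hw => hmem _ ?_ ?_⟩
  · rw [norm_smul, Real.norm_of_nonneg hh.1]
    calc h * ‖w‖ ≤ δ / (2 * R) * R := mul_le_mul hh.2 (hseg w hw).2 (norm_nonneg w) (by positivity)
      _ < δ := by field_simp; linarith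
  · rw [real_inner_smul_right, norm_smul, Real.norm_of_nonneg hh.1]
    have : a / R * ‖w‖ ≤ a := by
      rw [div_mul_eq_mul_div, div_le_iff₀ hR]; exact mul_le_mul_of_nonneg_left (hseg w hw).2 ha.le
    nlinarith [(hseg w hw).1, hh.1]

lemma eventually_add_smul_mem_closure {w : E n} (hw : w ∈ inwardCone Ω x) :
    ∀ᶠ h in 𝓝[>] (0 : ℝ), x + h • w ∈ closure Ω := by
  obtain ⟨h₀, hh₀, hseg⟩ := exists_smul_segment_subset_closure hx hC1 hw hw
  filter_upwards [Ioo_mem_nhdsGT hh₀] with h hh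
  exact hseg h ⟨hh.1.le, hh.2.le⟩ w (left_mem_segment ℝ w w)

lemma diniFilter_neBot_of_mem_closure {θ : E n} (hθ : θ ∈ closure (inwardCone Ω x)) :
    (diniFilter (closure Ω) x θ).NeBot :=
  diniFilter_neBot ((mem_closure_iff_frequently.1 hθ).mono
    fun _ hw => eventually_add_smul_mem_closure hx hC1 hw)

lemma exists_add_smul_mem_inwardCone {d : E n} (hd : d ∈ inwardCone Ω x) {s : ℝ} (hs : 0 < s)
    (hsd : s * ‖d‖ ≤ 1) :
    ∃ δ > 0, ∀ v : E n, ‖v‖ < δ → x + v ∈ closure Ω → v ≠ 0 →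
      v + (s * ‖v‖) • d ∈ inwardCone Ω x ∧
        ∀ t ∈ Icc (0 : ℝ) 1, x + t • (v + (s * ‖v‖) • d) ∈ closure Ω := by
  set c := -⟪outerNormal Ω x, d⟫_ℝ
  have hc : 0 < c := neg_pos.2 hd
  obtain ⟨δ₁, hδ₁, hout⟩ := Metric.eventually_nhds_iff_ball.1
    (eventually_inner_outerNormal_le hx hC1 (half_pos (mul_pos hs hc)))
  obtain ⟨δ₂, hδ₂, hin⟩ := exists_add_mem_closure_of_inner_le hx hC1
    (div_pos (mul_pos hs hc) four_pos)
  refine ⟨min δ₁ (δ₂ / 2), by positivity, fun v hv hmem hv0 => ?_⟩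
  set w := v + (s * ‖v‖) • d
  have hνv := hout v (by simpa using hv.trans_le (min_le_left _ _)) hmem
  have hνw : ⟪outerNormal Ω x, w⟫_ℝ ≤ -(s * c / 2) * ‖v‖ := by
    rw [inner_add_right, real_inner_smul_right]
    linarith
  have hw : ‖w‖ ≤ 2 * ‖v‖ := by
    refine (norm_add_le _ _).trans ?_
    rw [norm_smul, Real.norm_of_nonneg (by positivity)]
    nlinarith [norm_nonneg v]
  have hsc : 0 < s * c := mul_pos hs hc
  have hνw' : ⟪outerNormal Ω x, w⟫_ℝ ≤ -(s * c / 4) * ‖w‖ := by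
    nlinarith [mul_le_mul_of_nonneg_left hw hsc.le]
  refine ⟨by show ⟪outerNormal Ω x, w⟫_ℝ < 0; nlinarith [mul_pos hsc (norm_pos_iff.2 hv0)],
    fun t ht => hin _ ?_ ?_⟩
  · rw [norm_smul, Real.norm_of_nonneg ht.1]
    nlinarith [min_le_right δ₁ (δ₂ / 2), norm_nonneg w, ht.2]
  · rw [real_inner_smul_right, norm_smul, Real.norm_of_nonneg ht.1]
    nlinarith [mul_le_mul_of_nonneg_left hνw' ht.1]

end InwardCone

section BoundaryDerivative

variable {n : ℕ} {Ω : Set (E n)} {u : E n → ℝ} {K : ℝ≥0} {ω : ℝ → ℝ} {x : E n}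
  (hx : x ∈ frontier Ω) (hC1 : ContDiffAt ℝ 1 (oriDist Ω) x)
  (hK : LipschitzOnWith K u (closure Ω)) (hω : IsModulus ω) (hu : SemiconcaveWith (closure Ω) u ω)
include hx hC1 hK hω hu

lemma tendsto_radialDeriv_of_mem_inwardCone {w : E n} (hw : w ∈ inwardCone Ω x) :
    Tendsto (fun h => diffQuot u x (h, w)) (𝓝[>] 0) (𝓝 (radialDeriv u x w)) := by
  obtain ⟨h₀, hh₀, hseg⟩ := exists_smul_segment_subset_closure hx hC1 hw hw
  exact tendsto_radialDeriv hK hω hu hh₀ fun t ht => hseg t ht w (left_mem_segment ℝ w w)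

lemma lipschitzOnWith_radialDeriv : LipschitzOnWith K (radialDeriv u x) (inwardCone Ω x) := by
  refine LipschitzOnWith.of_dist_le_mul fun w hw w' hw' => ?_
  rw [Real.dist_eq, dist_eq_norm]
  exact abs_radialDeriv_sub_le hK (tendsto_radialDeriv_of_mem_inwardCone hx hC1 hK hω hu hw)
    (tendsto_radialDeriv_of_mem_inwardCone hx hC1 hK hω hu hw')
    ((eventually_add_smul_mem_closure hx hC1 hw).and (eventually_add_smul_mem_closure hx hC1 hw'))

lemma concaveOn_radialDeriv : ConcaveOn ℝ (inwardCone Ω x) (radialDeriv u x) := by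
  refine ⟨convex_inwardCone, fun w₁ h₁ w₂ h₂ a b ha hb hab => ?_⟩
  obtain ⟨h₀, hh₀, hseg⟩ := exists_smul_segment_subset_closure hx hC1 h₁ h₂
  simp only [smul_eq_mul]
  refine radialDeriv_add_le hω hu ha hb hab
    (tendsto_radialDeriv_of_mem_inwardCone hx hC1 hK hω hu h₁)
    (tendsto_radialDeriv_of_mem_inwardCone hx hC1 hK hω hu h₂)
    (tendsto_radialDeriv_of_mem_inwardCone hx hC1 hK hω hu (convex_inwardCone h₁ h₂ ha hb hab)) ?_
  filter_upwards [Ioo_mem_nhdsGT hh₀] with h hh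
  exact hseg h ⟨hh.1.le, hh.2.le⟩

lemma mem_superDiffOn_of_radialDeriv_le (hν : outerNormal Ω x ≠ 0) {p : E n}
    (hp : ∀ w ∈ inwardCone Ω x, radialDeriv u x w ≤ ⟪p, w⟫_ℝ) :
    p ∈ superDiffOn (closure Ω) u x := by
  intro ε hε
  -- Push `v = y - x` into the inward cone along the unit inner normal `d`, by `s ‖v‖`.
  set d := -(‖outerNormal Ω x‖⁻¹ • outerNormal Ω x)
  have hd1 : ‖d‖ = 1 := by rw [norm_neg]; exact norm_smul_inv_norm hν
  have hd : d ∈ inwardCone Ω x := by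
    show ⟪_, -(_ • _)⟫_ℝ < 0
    rw [inner_neg_right, real_inner_smul_right, neg_neg_iff_pos]
    exact mul_pos (inv_pos.2 (norm_pos_iff.2 hν)) (real_inner_self_pos.2 hν)
  obtain ⟨s, hs, hs1, hsε⟩ : ∃ s > 0, s ≤ 1 ∧ s * (K + ‖p‖) ≤ ε / 2 := by
    refine ⟨min 1 (ε / (2 * (K + ‖p‖ + 1))), by positivity, min_le_left _ _, ?_⟩
    calc min 1 (ε / (2 * (K + ‖p‖ + 1))) * (K + ‖p‖)
        ≤ ε / (2 * (K + ‖p‖ + 1)) * (K + ‖p‖ + 1) :=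
          mul_le_mul (min_le_right _ _) (by linarith) (by positivity) (by positivity)
      _ = ε / 2 := by field_simp
  obtain ⟨δ, hδ, hcone⟩ :=
    exists_add_smul_mem_inwardCone hx hC1 hd hs (by rw [hd1, mul_one]; exact hs1)
  obtain ⟨δ', (hδ' : 0 < δ'), hωδ⟩ := mem_nhdsGT_iff_exists_Ioo_subset.1
    (hω.2.2.2.eventually (gt_mem_nhds (by positivity : 0 < ε / 4)))
  refine ⟨min δ (δ' / 2), by positivity, fun y hy hyx => ?_⟩
  obtain ⟨v, rfl⟩ : ∃ v, y = x + v := ⟨y - x, by abel⟩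
  rw [add_sub_cancel_left] at hyx ⊢
  rcases eq_or_ne v 0 with rfl | hv0
  · simp
  set w := v + (s * ‖v‖) • d with hw_def
  obtain ⟨hwC, hseg⟩ := hcone v (hyx.trans_le (min_le_left _ _)) hy hv0
  have hvw : ‖v - w‖ = s * ‖v‖ := by
    rw [hw_def, sub_add_cancel_left, norm_neg, norm_smul, hd1, mul_one,
      Real.norm_of_nonneg (by positivity)]
  have hw : ‖w‖ ≤ 2 * ‖v‖ := by
    calc ‖w‖ ≤ ‖v‖ + ‖v - w‖ := by simpa using norm_sub_le v (v - w)
      _ ≤ 2 * ‖v‖ := by nlinarith [norm_nonneg v]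
  have hω' : ω ‖w‖ < ε / 4 := by
    refine hωδ ⟨norm_pos_iff.2 fun h => ?_, by linarith [min_le_right δ (δ' / 2)]⟩
    simp [inwardCone, ← hw_def, h] at hwC
  have := sub_sub_inner_le_of_radialDeriv_le hK hω hu hy hseg (hp w hwC)
  rw [hvw] at this
  nlinarith [mul_le_mul_of_nonneg_right hsε (norm_nonneg v),
    mul_le_mul_of_nonneg_left hω'.le (norm_nonneg w)]

lemma exists_mem_superDiffOn_tendsto_radialDeriv (hν : outerNormal Ω x ≠ 0) {θ : E n}
    (hθ : θ ∈ closure (inwardCone Ω x)) :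
    ∃ p ∈ superDiffOn (closure Ω) u x,
      Tendsto (radialDeriv u x) (𝓝[inwardCone Ω x] θ) (𝓝 ⟪p, θ⟫_ℝ) := by
  obtain ⟨g, hg, hgΦ⟩ := (lipschitzOnWith_radialDeriv hx hC1 hK hω hu).extend_real
  have hhom : ∀ t : ℝ, 0 < t → ∀ w ∈ inwardCone Ω x, g (t • w) = t * g w := fun t ht w hw => by
    rw [← hgΦ hw, ← hgΦ (smul_mem_inwardCone ht hw),
      radialDeriv_smul (tendsto_radialDeriv_of_mem_inwardCone hx hC1 hK hω hu hw) ht]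
  obtain ⟨ℓ, hle, heq⟩ := ((concaveOn_radialDeriv hx hC1 hK hω hu).congr hgΦ).exists_le_eq_of_smul
    hg.lipschitzOnWith (fun t ht w hw => smul_mem_inwardCone ht hw) hhom hθ
  refine ⟨(InnerProductSpace.toDual ℝ (E n)).symm ℓ, ?_, ?_⟩
  · refine mem_superDiffOn_of_radialDeriv_le hx hC1 hK hω hu hν fun w hw => ?_
    rw [InnerProductSpace.toDual_symm_apply, hgΦ hw]
    exact hle w hw
  · rw [InnerProductSpace.toDual_symm_apply, heq]
    exact ((hg.continuous.tendsto θ).mono_left nhdsWithin_le_nhds).congr'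
      (eventuallyEq_nhdsWithin_of_eqOn hgΦ).symm

lemma tendsto_diffQuot_diniFilter {θ p : E n} (hp : p ∈ superDiffOn (closure Ω) u x)
    (hΦ : Tendsto (radialDeriv u x) (𝓝[inwardCone Ω x] θ) (𝓝 ⟪p, θ⟫_ℝ))
    (hθ : θ ∈ closure (inwardCone Ω x)) :
    Tendsto (diffQuot u x) (diniFilter (closure Ω) x θ) (𝓝 ⟪p, θ⟫_ℝ) := by
  refine tendsto_order.2 ⟨fun a ha => ?_, fun a ha => ?_⟩
  · have hlim : Tendsto (fun w => radialDeriv u x w - K * ‖θ - w‖) (𝓝[inwardCone Ω x] θ)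
        (𝓝 ⟪p, θ⟫_ℝ) := by
      simpa using hΦ.sub (((by fun_prop : Continuous fun w : E n => (K : ℝ) * ‖θ - w‖).tendsto θ
        ).mono_left nhdsWithin_le_nhds)
    have := mem_closure_iff_nhdsWithin_neBot.1 hθ
    obtain ⟨w, hw, hwC⟩ := ((hlim.eventually (lt_mem_nhds (by linarith :
      (a + ⟪p, θ⟫_ℝ) / 2 < ⟪p, θ⟫_ℝ))).and self_mem_nhdsWithin).exists
    filter_upwards [eventually_le_diffQuot hK
      (tendsto_radialDeriv_of_mem_inwardCone hx hC1 hK hω hu hwC)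
      (eventually_add_smul_mem_closure hx hC1 hwC) (by linarith : 0 < (⟪p, θ⟫_ℝ - a) / 2)]
      with q hq
    linarith
  · filter_upwards [eventually_diffQuot_le hp (by linarith : 0 < (a - ⟪p, θ⟫_ℝ) / 2)] with q hq
    linarith

end BoundaryDerivative

theorem stmt2_general {n : ℕ} (Ω : Set (E n)) (hΩo : IsOpen Ω) (hΩ2 : HasC2Boundary Ω)
    (u : E n → ℝ) (hLip : ∃ K : NNReal, LipschitzOnWith K u (closure Ω))
    (ω : ℝ → ℝ) (hω : IsModulus ω) (hu : SemiconcaveWith (closure Ω) u ω)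
    (x : E n) (hx : x ∈ frontier Ω)
    (θ : E n) (hθ : (inner ℝ θ (outerNormal Ω x) : ℝ) ≤ 0) :
    ∃ mθ : ℝ,
      IsLeast {r : ℝ | ∃ p ∈ superDiffOn (closure Ω) u x, (inner ℝ p θ : ℝ) = r} mθ ∧
      Filter.limsup (diffQuot u x) (diniFilter (closure Ω) x θ) = mθ ∧
      Filter.liminf (diffQuot u x) (diniFilter (closure Ω) x θ) = mθ ∧
      Filter.Tendsto (diffQuot u x) (diniFilter (closure Ω) x θ) (nhds mθ) := by
  obtain ⟨K, hK⟩ := hLip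
  have hC1 : ContDiffAt ℝ 1 (oriDist Ω) x := (hΩ2.contDiffAt_oriDist hx).of_le (by norm_num)
  have hν := outerNormal_ne_zero hx hC1 hΩo
  have hθC : θ ∈ closure (inwardCone Ω x) := mem_closure_inwardCone hν (real_inner_comm θ _ ▸ hθ)
  obtain ⟨p, hp, hΦ⟩ := exists_mem_superDiffOn_tendsto_radialDeriv hx hC1 hK hω hu hν hθC
  have hT := tendsto_diffQuot_diniFilter hx hC1 hK hω hu hp hΦ hθC
  have := diniFilter_neBot_of_mem_closure hx hC1 hθC
  refine ⟨⟪p, θ⟫_ℝ, ⟨⟨p, hp, rfl⟩, ?_⟩, hT.limsup_eq, hT.liminf_eq, hT⟩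
  rintro _ ⟨p', hp', rfl⟩
  exact le_inner_of_tendsto_diffQuot hT hp'

/-- Lemma 2.1 of the paper: let `u : Ω̄ → ℝ` be Lipschitz and semiconcave
with modulus `ω`, `x ∈ ∂Ω`, `ν(x)` the outward unit normal at `x`.  For every `θ` with
`⟨θ, ν(x)⟩ ≤ 0`, the upper and lower Dini derivatives of `u` at `x` in direction `θ`
coincide and equal `min_{p ∈ D⁺u(x)} ⟨p, θ⟩`; in particular the one-sided directional
derivative `∂⁺_θ u(x)` exists and equals this minimum. -/
theorem stmt2 {n : ℕ} (Ω : Set (E n)) (hΩo : IsOpen Ω) (hΩne : Ω.Nonempty)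
    (hΩb : Bornology.IsBounded Ω) (hΩ2 : HasC2Boundary Ω)
    (u : E n → ℝ) (hLip : ∃ K : NNReal, LipschitzOnWith K u (closure Ω))
    (ω : ℝ → ℝ) (hω : IsModulus ω) (hu : SemiconcaveWith (closure Ω) u ω)
    (x : E n) (hx : x ∈ frontier Ω)
    (θ : E n) (hθ : (inner ℝ θ (outerNormal Ω x) : ℝ) ≤ 0) :
    ∃ mθ : ℝ,
      IsLeast {r : ℝ | ∃ p ∈ superDiffOn (closure Ω) u x, (inner ℝ p θ : ℝ) = r} mθ ∧
      Filter.limsup (diffQuot u x) (diniFilter (closure Ω) x θ) = mθ ∧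
      Filter.liminf (diffQuot u x) (diniFilter (closure Ω) x θ) = mθ ∧
      Filter.Tendsto (diffQuot u x) (diniFilter (closure Ω) x θ) (nhds mθ) :=
  stmt2_general Ω hΩo hΩ2 u hLip ω hω hu x hx θ hθ
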